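/- For every finite X ⊆ 𝒟 that is a proper cover of 𝒯 there exists an integer N ≥ 2 such that the weight N·w(N−1) of any N-rectangle is at most the weight w(X) (the sum of the third coordinates of the members of X). -/

import Mathlib

noncomputable section

/-- 𝒯 = ∏_{n∈ℕ} [2^n]  (the paper's index `n ∈ {1,2,…}` is the Lean index `n+1`). -/
abbrev Tal : Type := (n : ℕ) → Fin (2 ^ (n + 1))

/-- `S_{n,τ} = {f ∈ 𝒯 : f(n) ≠ τ}`. -/
def Sset (n : ℕ) (τ : Fin (2 ^ (n + 1))) : Set Tal := {f | f n ≠ τ}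

/-- The 𝒟-set `⋂_{n ∈ I} S_{n, t n}` with (nonempty, finite) index set `I`;
only the values of `t` on `I` matter. -/
def DSet (I : Finset ℕ) (t : (n : ℕ) → Fin (2 ^ (n + 1))) : Set Tal :=
  {f | ∀ n ∈ I, f n ≠ t n}

/-- `η(k) = 2^{2500 k⁴}`. -/
def ηT (k : ℕ) : ℕ := 2 ^ (2500 * k ^ 4)

/-- `α(k) = (k+5)^{-3}`. -/
def αT (k : ℕ) : ℝ := (((k : ℝ) + 5) ^ 3)⁻¹

/-- `δ(m) = min {n ∈ ℕ : η(n) ≥ m}` (with `ℕ = {1,2,…}`). -/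
def δT (m : ℕ) : ℕ := sInf {n : ℕ | 1 ≤ n ∧ m ≤ ηT n}

/-- `w(n) = 2^{-δ(n)} (η(δ(n))/n)^{α(δ(n))}`. -/
def wT (n : ℕ) : ℝ :=
  (2 : ℝ) ^ (-(δT n : ℤ)) * ((ηT (δT n) : ℝ) / (n : ℝ)) ^ (αT (δT n))

/-- Membership in Talagrand's family 𝒟 for a triple `(X, I, w)`:  for some `k ∈ {1,2,…}`,
`X` is a 𝒟-set with index set `I`, `1 ≤ |I| ≤ η(k)`, and `w = 2^{-k}(η(k)/|I|)^{α(k)}`. -/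
def memD (p : Set Tal × Finset ℕ × ℝ) : Prop :=
  ∃ k : ℕ, 1 ≤ k ∧ (∃ t : (n : ℕ) → Fin (2 ^ (n + 1)), p.1 = DSet p.2.1 t) ∧
    p.2.1.Nonempty ∧ p.2.1.card ≤ ηT k ∧
    p.2.2 = (2 : ℝ) ^ (-(k : ℤ)) * ((ηT k : ℝ) / (p.2.1.card : ℝ)) ^ (αT k)

/-- Talagrand's first pathological submeasure:
`ψ(B) = inf { w(Y) : Y ⊆ 𝒟 finite, B ⊆ ⋃ Y }`. -/
def ψT (B : Set Tal) : ℝ :=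
  sInf {r : ℝ | ∃ Y : Finset (Set Tal × Finset ℕ × ℝ), (∀ p ∈ Y, memD p) ∧
    B ⊆ (⋃ p ∈ Y, p.1) ∧ r = ∑ p ∈ Y, p.2.2}

end

/-
Take `N = 2`. A member of `𝒟` with `k ≥ 1` and index set of size `m` has weight at least
`w(1) · m^{-α(1)}`, so it suffices that `∑ |I|^{-1/216} ≥ 2` over any cover. If that sum were
below `2`, then (as `m^{1/216} ≤ (m+1)/2`) for every `p` at most `|I_p|` members have index sets
no larger than that of `p`; by Hall's theorem the index sets then have a system of distinct
representatives `n_p ∈ I_p`, and the point `f` with `f(n_p) = X_p(n_p)` lies in no member of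
the family.
-/

open Finset

noncomputable def dWeight (k m : ℕ) : ℝ := (2 : ℝ) ^ (-(k : ℤ)) * ((ηT k : ℝ) / (m : ℝ)) ^ (αT k)

lemma wT_eq_dWeight (n : ℕ) : wT n = dWeight (δT n) n := rfl

lemma δT_one : δT 1 = 1 := by
  have h1 : 1 ∈ {n : ℕ | 1 ≤ n ∧ 1 ≤ ηT n} := ⟨le_rfl, Nat.one_le_two_pow⟩
  exact le_antisymm (Nat.sInf_le h1) (Nat.sInf_mem ⟨1, h1⟩).1

lemma dWeight_eq_rpow (k m : ℕ) :
    dWeight k m = (2 : ℝ) ^ (2500 * (k : ℝ) ^ 4 * αT k - k) * (m : ℝ) ^ (-αT k) := by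
  have hη : (ηT k : ℝ) = (2 : ℝ) ^ (2500 * (k : ℝ) ^ 4) := by
    rw [ηT, Nat.cast_pow, ← Real.rpow_natCast]
    norm_num
  rw [dWeight, hη, Real.div_rpow (by positivity) (Nat.cast_nonneg m), ← Real.rpow_mul zero_le_two,
    Real.rpow_neg (Nat.cast_nonneg m), ← Real.rpow_intCast, Real.rpow_sub two_pos,
    Int.cast_neg, Int.cast_natCast, Real.rpow_neg zero_le_two]
  ring

lemma αT_le_αT_one {k : ℕ} (hk : 1 ≤ k) : αT k ≤ αT 1 := by
  unfold αT
  gcongr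

lemma dWeight_exponent_one_le {k : ℕ} (hk : 1 ≤ k) :
    2500 * (1 : ℝ) ^ 4 * αT 1 - 1 ≤ 2500 * (k : ℝ) ^ 4 * αT k - k := by
  have hk : (1 : ℝ) ≤ k := by exact_mod_cast hk
  -- `216` times the gap is `(k - 1) (539784 k³ + 534260 k² + 483800 k + 285500)`.
  have key : (2500 / 216 - 1 + k) * (k + 5) ^ 3 ≤ 2500 * (k : ℝ) ^ 4 := by
    nlinarith [mul_nonneg (sub_nonneg.2 hk)
      (show (0 : ℝ) ≤ 539784 * k ^ 3 + 534260 * k ^ 2 + 483800 * k + 285500 by positivity)]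
  have : 2500 / 216 - 1 + k ≤ 2500 * (k : ℝ) ^ 4 * αT k := by
    rw [αT, ← div_eq_mul_inv, le_div_iff₀ (by positivity)]
    exact key
  norm_num [αT] at this ⊢
  linarith

lemma wT_one_mul_rpow_neg_le_dWeight {k m : ℕ} (hk : 1 ≤ k) (hm : 1 ≤ m) :
    wT 1 * (m : ℝ) ^ (-αT 1) ≤ dWeight k m := by
  have hm : (1 : ℝ) ≤ m := by exact_mod_cast hm
  rw [wT_eq_dWeight, δT_one, dWeight_eq_rpow, dWeight_eq_rpow, Nat.cast_one, Real.one_rpow,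
    mul_one]
  exact mul_le_mul (Real.rpow_le_rpow_of_exponent_le one_le_two (dWeight_exponent_one_le hk))
    (Real.rpow_le_rpow_of_exponent_le hm (neg_le_neg (αT_le_αT_one hk))) (by positivity)
    (by positivity)

lemma rpow_le_add_one_div_two {x a : ℝ} (hx : 1 ≤ x) (ha₀ : 0 ≤ a) (ha : a ≤ 1 / 2) :
    x ^ a ≤ (x + 1) / 2 := by
  have h := rpow_one_add_le_one_add_mul_self (s := x - 1) (by linarith) ha₀ (by linarith)
  rw [add_sub_cancel] at h
  nlinarith

lemma card_filter_le_of_sum_rpow_neg_lt_two {ι : Type*} (X : Finset ι) (m : ι → ℕ)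
    (hm : ∀ p ∈ X, 1 ≤ m p) {a : ℝ} (ha₀ : 0 ≤ a) (ha : a ≤ 1 / 2)
    (hsum : ∑ q ∈ X, (m q : ℝ) ^ (-a) < 2) {p : ι} (hp : p ∈ X) :
    #{q ∈ X | m q ≤ m p} ≤ m p := by
  have hmp : (1 : ℝ) ≤ m p := by exact_mod_cast hm p hp
  have hcount : (#{q ∈ X | m q ≤ m p} : ℝ) * (m p : ℝ) ^ (-a) < 2 := by
    refine lt_of_le_of_lt ?_ hsum
    rw [← nsmul_eq_mul]
    refine (card_nsmul_le_sum _ _ _ fun q hq => ?_).trans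
      (sum_le_sum_of_subset_of_nonneg (filter_subset _ _) fun _ _ _ => by positivity)
    obtain ⟨hqX, hqp⟩ := mem_filter.1 hq
    have hq : (0 : ℝ) < m q := by exact_mod_cast hm q hqX
    exact Real.rpow_le_rpow_of_nonpos hq (by exact_mod_cast hqp) (by linarith)
  rw [Real.rpow_neg (by positivity), ← div_eq_mul_inv, div_lt_iff₀ (by positivity)] at hcount
  have := rpow_le_add_one_div_two hmp ha₀ ha
  have : (#{q ∈ X | m q ≤ m p} : ℝ) < m p + 1 := by linarith
  exact Nat.lt_succ_iff.1 (by exact_mod_cast this)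

lemma exists_injective_mem_of_card_filter_le {ι α : Type*} [DecidableEq α] (X : Finset ι)
    (I : ι → Finset α) (h : ∀ p ∈ X, #{q ∈ X | #(I q) ≤ #(I p)} ≤ #(I p)) :
    ∃ σ : X → α, Function.Injective σ ∧ ∀ p : X, σ p ∈ I p := by
  refine (all_card_le_biUnion_card_iff_exists_injective fun p : X => I p).1 fun s => ?_
  rcases s.eq_empty_or_nonempty with rfl | hs
  · simp
  obtain ⟨q, hqs, hmax⟩ := s.exists_max_image (fun p : X => #(I p)) hs
  calc #s = #(s.map (Function.Embedding.subtype _)) := (card_map _).symm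
    _ ≤ #{p ∈ X | #(I p) ≤ #(I q)} := card_le_card fun p hp => by
        obtain ⟨p, hps, rfl⟩ := mem_map.1 hp
        exact mem_filter.2 ⟨p.2, hmax p hps⟩
    _ ≤ #(I q) := h q q.2
    _ ≤ #(s.biUnion fun p : X => I p) :=
        card_le_card (subset_biUnion_of_mem (fun p : X => I p) hqs)

lemma exists_forall_notMem_DSet {κ : Type*} (I : κ → Finset ℕ) (t : κ → Tal) (σ : κ → ℕ)
    (hσ : Function.Injective σ) (hσI : ∀ i, σ i ∈ I i) :
    ∃ f : Tal, ∀ i, f ∉ DSet (I i) (t i) := by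
  cases isEmpty_or_nonempty κ
  · exact ⟨fun _ => ⟨0, by positivity⟩, isEmptyElim⟩
  · refine ⟨fun n => t (Function.invFun σ n) n, fun i hi => hi (σ i) (hσI i) ?_⟩
    change t (Function.invFun σ (σ i)) (σ i) = _
    rw [Function.leftInverse_invFun hσ i]

lemma two_le_sum_rpow_neg_of_cover (X : Finset (Set Tal × Finset ℕ × ℝ))
    (hD : ∀ p ∈ X, memD p) (hcover : Set.univ ⊆ ⋃ p ∈ X, p.1) :
    2 ≤ ∑ p ∈ X, (#p.2.1 : ℝ) ^ (-αT 1) := by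
  by_contra! hlt
  have hcard : ∀ p ∈ X, 1 ≤ #p.2.1 := fun p hp => card_pos.2 (hD p hp).choose_spec.2.2.1
  have hαT : 0 ≤ αT 1 ∧ αT 1 ≤ 1 / 2 := by norm_num [αT]
  obtain ⟨σ, hσ, hσI⟩ := exists_injective_mem_of_card_filter_le X (fun p => p.2.1)
    fun p hp => card_filter_le_of_sum_rpow_neg_lt_two X _ hcard hαT.1 hαT.2 hlt hp
  have hDSet : ∀ p : X, ∃ t, p.1.1 = DSet p.1.2.1 t := fun p => (hD p p.2).choose_spec.2.1
  choose t ht using hDSet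
  obtain ⟨f, hf⟩ := exists_forall_notMem_DSet (fun p : X => p.1.2.1) t σ hσ hσI
  obtain ⟨p, hp, hfp⟩ := Set.mem_iUnion₂.1 (hcover (Set.mem_univ f))
  exact hf ⟨p, hp⟩ (ht ⟨p, hp⟩ ▸ hfp)

theorem statement9_general (X : Finset (Set Tal × Finset ℕ × ℝ))
    (hD : ∀ p ∈ X, memD p)
    (hcover : Set.univ ⊆ ⋃ p ∈ X, p.1) :
    ∃ N : ℕ, 2 ≤ N ∧ (N : ℝ) * wT (N - 1) ≤ ∑ p ∈ X, p.2.2 := by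
  refine ⟨2, le_rfl, ?_⟩
  have hw : 0 ≤ wT 1 := by rw [wT_eq_dWeight, dWeight]; positivity
  calc ((2 : ℕ) : ℝ) * wT (2 - 1) = wT 1 * 2 := by norm_num [mul_comm]
    _ ≤ wT 1 * ∑ p ∈ X, (#p.2.1 : ℝ) ^ (-αT 1) :=
        mul_le_mul_of_nonneg_left (two_le_sum_rpow_neg_of_cover X hD hcover) hw
    _ = ∑ p ∈ X, wT 1 * (#p.2.1 : ℝ) ^ (-αT 1) := mul_sum _ _ _
    _ ≤ ∑ p ∈ X, p.2.2 := sum_le_sum fun p hp => by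
        obtain ⟨k, hk, -, hne, -, hweight⟩ := hD p hp
        rw [hweight]
        exact wT_one_mul_rpow_neg_le_dWeight hk (card_pos.2 hne)

/-- For every finite `X ⊆ 𝒟` that properly covers 𝒯 there is an integer
`N ≥ 2` such that the weight `N·w(N−1)` of any `N`-rectangle is at most the weight of `X`. -/
theorem statement9 (X : Finset (Set Tal × Finset ℕ × ℝ))
    (hD : ∀ p ∈ X, memD p)
    (hcover : Set.univ ⊆ ⋃ p ∈ X, p.1)
    (hproper : ∀ Y ⊆ X, Y ≠ X → ¬ (Set.univ ⊆ ⋃ p ∈ Y, p.1)) :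
    ∃ N : ℕ, 2 ≤ N ∧ (N : ℝ) * wT (N - 1) ≤ ∑ p ∈ X, p.2.2 :=
  statement9_general X hD hcover
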